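/- arXiv:2509.18066 — 7 statements merged into one kernel-verified Lean document; each statement's English description precedes it below -/
import Mathlib

section
/- The function x ↦ tanh²(√x) is strictly concave on (0, ∞). Consequently, for any a > 0 and b ≥ 0, the function x ↦ tanh²(a·√(b + x)) is strictly concave on (0, ∞). -/
open Real Set

private lemma hasDerivAt_tanh' (x : ℝ) :
    HasDerivAt Real.tanh (1 - Real.tanh x ^ 2) x := by
  have hc : Real.cosh x ≠ 0 := (Real.cosh_pos x).ne'
  have h := (Real.hasDerivAt_sinh x).fun_div (Real.hasDerivAt_cosh x) hc
  have hfun : Real.tanh = fun y => Real.sinh y / Real.cosh y := by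
    funext y; exact Real.tanh_eq_sinh_div_cosh y
  rw [hfun]
  refine h.congr_deriv ?_
  simp only
  have h1 : Real.cosh x ^ 2 - Real.sinh x ^ 2 = 1 := Real.cosh_sq_sub_sinh_sq x
  field_simp

private lemma tanh_pos' {t : ℝ} (ht : 0 < t) : 0 < Real.tanh t := by
  rw [Real.tanh_eq_sinh_div_cosh]
  exact div_pos (by rwa [Real.sinh_pos_iff]) (Real.cosh_pos t)

private lemma tanh_sq_lt_one (t : ℝ) : Real.tanh t ^ 2 < 1 := by
  rw [Real.tanh_eq_sinh_div_cosh, div_pow, div_lt_one (pow_pos (Real.cosh_pos t) 2)]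
  nlinarith [Real.cosh_sq_sub_sinh_sq t]

private lemma continuous_tanh' : Continuous Real.tanh :=
  continuous_iff_continuousAt.2 fun x => (hasDerivAt_tanh' x).continuousAt

private lemma key_ineq {t : ℝ} (ht0 : 0 < t) : (1 - Real.tanh t ^ 2) * t < Real.tanh t := by
  have hc : (0:ℝ) < Real.cosh t := Real.cosh_pos t
  have h1 : Real.cosh t ^ 2 - Real.sinh t ^ 2 = 1 := Real.cosh_sq_sub_sinh_sq t
  have h2 : t < Real.sinh t := Real.self_lt_sinh_iff.2 ht0
  have h3 : 1 ≤ Real.cosh t := Real.one_le_cosh t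
  have hs : 0 < Real.sinh t := Real.sinh_pos_iff.2 ht0
  have h4 : 1 - Real.tanh t ^ 2 = 1 / Real.cosh t ^ 2 := by
    rw [Real.tanh_eq_sinh_div_cosh, div_pow]
    field_simp
    exact h1
  rw [h4, Real.tanh_eq_sinh_div_cosh, div_mul_eq_mul_div,
    div_lt_div_iff₀ (by positivity) hc]
  have h5 : t * Real.cosh t < Real.sinh t * Real.cosh t :=
    mul_lt_mul_of_pos_right h2 hc
  have h6 : Real.sinh t * Real.cosh t ≤ Real.sinh t * Real.cosh t ^ 2 := by
    nlinarith [mul_nonneg (mul_pos hs hc).le (sub_nonneg.2 h3)]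
  nlinarith

/-- `tanh t / t` is strictly antitone on `(0, ∞)`. -/
private lemma strictAntiOn_A : StrictAntiOn (fun t => Real.tanh t / t) (Ioi (0:ℝ)) := by
  apply strictAntiOn_of_deriv_neg (convex_Ioi 0)
  · exact continuous_tanh'.continuousOn.div continuousOn_id fun t ht => ne_of_gt ht
  · intro t ht
    rw [interior_Ioi] at ht
    have ht0 : (0:ℝ) < t := ht
    have hd : HasDerivAt (fun t => Real.tanh t / t)
        (((1 - Real.tanh t ^ 2) * t - Real.tanh t * 1) / t ^ 2) t :=
      (hasDerivAt_tanh' t).div (hasDerivAt_id t) ht0.ne'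
    rw [hd.deriv]
    apply div_neg_of_neg_of_pos _ (pow_pos ht0 2)
    linarith [key_ineq ht0]

/-- `1 - tanh t ^ 2` is strictly antitone on `(0, ∞)`. -/
private lemma strictAntiOn_B : StrictAntiOn (fun t => 1 - Real.tanh t ^ 2) (Ioi (0:ℝ)) := by
  apply strictAntiOn_of_deriv_neg (convex_Ioi 0)
  · exact continuousOn_const.sub ((continuous_tanh'.pow 2).continuousOn)
  · intro t ht
    rw [interior_Ioi] at ht
    have hd : HasDerivAt (fun t => 1 - Real.tanh t ^ 2)
        (0 - 2 * Real.tanh t ^ 1 * (1 - Real.tanh t ^ 2)) t :=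
      (hasDerivAt_const t 1).sub ((hasDerivAt_tanh' t).pow 2)
    rw [hd.deriv]
    have := tanh_pos' ht
    have := _root_.tanh_sq_lt_one t
    nlinarith

/-- the combined function `G` -/
private lemma strictAntiOn_G :
    StrictAntiOn (fun t => Real.tanh t * (1 - Real.tanh t ^ 2) / t) (Ioi (0:ℝ)) := by
  intro s hs t ht hst
  have hs0 : (0:ℝ) < s := hs
  have ht0 : (0:ℝ) < t := ht
  have hGs : Real.tanh s * (1 - Real.tanh s ^ 2) / s
      = (Real.tanh s / s) * (1 - Real.tanh s ^ 2) := by ring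
  have hGt : Real.tanh t * (1 - Real.tanh t ^ 2) / t
      = (Real.tanh t / t) * (1 - Real.tanh t ^ 2) := by ring
  simp only [hGs, hGt]
  have hA := strictAntiOn_A hs ht hst
  have hB := strictAntiOn_B hs ht hst
  have hApos : 0 < Real.tanh t / t := div_pos (tanh_pos' ht0) ht0
  have hBpos : 0 < 1 - Real.tanh t ^ 2 := by linarith [_root_.tanh_sq_lt_one t]
  calc Real.tanh t / t * (1 - Real.tanh t ^ 2)
      < Real.tanh s / s * (1 - Real.tanh t ^ 2) := by
        exact mul_lt_mul_of_pos_right hA hBpos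
    _ < Real.tanh s / s * (1 - Real.tanh s ^ 2) := by
        apply mul_lt_mul_of_pos_left hB
        exact lt_trans hApos hA

private lemma derivF {x : ℝ} (hx : 0 < x) :
    HasDerivAt (fun x => Real.tanh (Real.sqrt x) ^ 2)
      (Real.tanh (Real.sqrt x) * (1 - Real.tanh (Real.sqrt x) ^ 2) / Real.sqrt x) x := by
  have hs : 0 < Real.sqrt x := Real.sqrt_pos.2 hx
  have h1 : HasDerivAt (fun x => Real.tanh (Real.sqrt x))
      ((1 - Real.tanh (Real.sqrt x) ^ 2) * (1 / (2 * Real.sqrt x))) x :=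
    (hasDerivAt_tanh' (Real.sqrt x)).comp x (Real.hasDerivAt_sqrt hx.ne')
  have h2 := h1.fun_pow 2
  refine h2.congr_deriv ?_
  push_cast
  field_simp

private lemma firstPart :
    StrictConcaveOn ℝ (Set.Ioi (0:ℝ)) (fun x => Real.tanh (Real.sqrt x) ^ 2) := by
  apply StrictAntiOn.strictConcaveOn_of_deriv (convex_Ioi 0)
  · exact ((continuous_tanh'.comp Real.continuous_sqrt).pow 2).continuousOn
  · rw [interior_Ioi]
    intro s hs t ht hst
    have hs0 : (0:ℝ) < s := hs
    have ht0 : (0:ℝ) < t := ht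
    rw [(derivF hs0).deriv, (derivF ht0).deriv]
    exact strictAntiOn_G (Real.sqrt_pos.2 hs0) (Real.sqrt_pos.2 ht0)
      (Real.sqrt_lt_sqrt hs0.le hst)

theorem tanh_sq_sqrt_strictConcave :
    StrictConcaveOn ℝ (Set.Ioi (0:ℝ)) (fun x => Real.tanh (Real.sqrt x) ^ 2) ∧
    ∀ a b : ℝ, 0 < a → 0 ≤ b →
      StrictConcaveOn ℝ (Set.Ioi (0:ℝ))
        (fun x => Real.tanh (a * Real.sqrt (b + x)) ^ 2) := by
  refine ⟨firstPart, fun a b ha hb => ⟨convex_Ioi 0, ?_⟩⟩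
  intro x hx y hy hxy p q hp hq hpq
  have hx0 : (0:ℝ) < x := hx
  have hy0 : (0:ℝ) < y := hy
  have ha2 : (0:ℝ) < a ^ 2 := by positivity
  -- rewrite f z = F (a^2*(b+z)) for z > 0
  have key : ∀ z : ℝ, 0 < z →
      Real.tanh (a * Real.sqrt (b + z)) ^ 2
        = Real.tanh (Real.sqrt (a ^ 2 * (b + z))) ^ 2 := by
    intro z hz
    have hbz : (0:ℝ) ≤ b + z := by linarith
    rw [Real.sqrt_mul (sq_nonneg a), Real.sqrt_sq ha.le]
  have hz0 : (0:ℝ) < p * x + q * y := by positivity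
  have hxs : a ^ 2 * (b + x) ∈ Ioi (0:ℝ) := by
    simp only [mem_Ioi]; positivity
  have hys : a ^ 2 * (b + y) ∈ Ioi (0:ℝ) := by
    simp only [mem_Ioi]; positivity
  have hne : a ^ 2 * (b + x) ≠ a ^ 2 * (b + y) := by
    intro h
    apply hxy
    have := mul_left_cancel₀ ha2.ne' h
    linarith
  have hcomb := firstPart.2 hxs hys hne hp hq hpq
  simp only [smul_eq_mul] at *
  have harg : p * (a ^ 2 * (b + x)) + q * (a ^ 2 * (b + y))
      = a ^ 2 * (b + (p * x + q * y)) := by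
    linear_combination (a ^ 2 * b) * hpq
  rw [harg] at hcomb
  rw [key x hx0, key y hy0, key _ hz0]
  exact hcomb
end

section
/- For every real x > 0, the quantity x − 3·x·tanh²(x) − tanh(x) is strictly negative. -/
theorem k_neg (x : ℝ) (hx : 0 < x) :
    x - 3 * x * Real.tanh x ^ 2 - Real.tanh x < 0 := by
  have hc : 0 < Real.cosh x := Real.cosh_pos x
  have hs : 0 < Real.sinh x := Real.sinh_pos_iff.mpr hx
  have h1 : 2 * x < Real.sinh (2 * x) := Real.self_lt_sinh_iff.mpr (by linarith)
  rw [Real.sinh_two_mul] at h1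
  have hsq : Real.cosh x ^ 2 - Real.sinh x ^ 2 = 1 := Real.cosh_sq_sub_sinh_sq x
  rw [Real.tanh_eq_sinh_div_cosh]
  have key : x * Real.cosh x ^ 2 - 3 * x * Real.sinh x ^ 2 - Real.sinh x * Real.cosh x < 0 := by
    nlinarith [mul_pos hx (mul_pos hs hs)]
  have heq : x - 3 * x * (Real.sinh x / Real.cosh x) ^ 2 - Real.sinh x / Real.cosh x
      = (x * Real.cosh x ^ 2 - 3 * x * Real.sinh x ^ 2 - Real.sinh x * Real.cosh x) / Real.cosh x ^ 2 := by
    field_simp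
  rw [heq]
  exact div_neg_of_neg_of_pos key (by positivity)
end

section
/- For any real numbers a ≥ b ≥ 0 and c > 0, the function x ↦ tanh²(c·√(a + x)) − tanh²(c·√(b + x)) is nonnegative and non-increasing on (0, ∞). -/
open Real Set

/-- tanh u ^ 2 = 1 - (cosh u ^ 2)⁻¹ -/
lemma tanh_sq_eq (u : ℝ) : Real.tanh u ^ 2 = 1 - (Real.cosh u ^ 2)⁻¹ := by
  have hc : Real.cosh u ≠ 0 := (Real.cosh_pos u).ne'
  have h := Real.cosh_sq_sub_sinh_sq u
  rw [Real.tanh_eq_sinh_div_cosh, div_pow]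
  field_simp
  linarith

lemma hasDerivAt_tanh_sq (u : ℝ) :
    HasDerivAt (fun u => Real.tanh u ^ 2) (2 * Real.sinh u / Real.cosh u ^ 3) u := by
  have hc : Real.cosh u ≠ 0 := (Real.cosh_pos u).ne'
  have h1 : HasDerivAt (fun u => Real.cosh u ^ 2) (2 * Real.cosh u ^ 1 * Real.sinh u) u := by
    simpa using (Real.hasDerivAt_cosh u).fun_pow 2
  have h2 : HasDerivAt (fun u => 1 - (Real.cosh u ^ 2)⁻¹)
      (2 * Real.sinh u / Real.cosh u ^ 3) u := by
    have h3 := (h1.inv (pow_ne_zero 2 hc)).const_sub 1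
    refine h3.congr_deriv ?_
    field_simp
  have heq : (fun u => Real.tanh u ^ 2) = fun u => 1 - (Real.cosh u ^ 2)⁻¹ :=
    funext fun v => tanh_sq_eq v
  rw [heq]
  exact h2

/-- the key auxiliary function -/
noncomputable def haux (u : ℝ) : ℝ := Real.sinh u / (u * Real.cosh u ^ 3)

lemma haux_anti : AntitoneOn haux (Set.Ioi (0:ℝ)) := by
  have hder : ∀ u ∈ Set.Ioi (0:ℝ), HasDerivAt haux
      ((Real.cosh u * (u * Real.cosh u ^ 3) -
        Real.sinh u * (1 * Real.cosh u ^ 3 + u * (3 * Real.cosh u ^ 2 * Real.sinh u))) /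
        (u * Real.cosh u ^ 3) ^ 2) u := by
    intro u hu
    have hu0 : (0:ℝ) < u := hu
    have hc : Real.cosh u ≠ 0 := (Real.cosh_pos u).ne'
    have hden : u * Real.cosh u ^ 3 ≠ 0 := by positivity
    have hdc : HasDerivAt (fun u => u * Real.cosh u ^ 3)
        (1 * Real.cosh u ^ 3 + u * (3 * Real.cosh u ^ 2 * Real.sinh u)) u := by
      have := (hasDerivAt_id u).fun_mul ((Real.hasDerivAt_cosh u).fun_pow 3)
      simpa [mul_comm, mul_left_comm, mul_assoc] using this
    exact (Real.hasDerivAt_sinh u).div hdc hden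
  apply antitoneOn_of_deriv_nonpos (convex_Ioi 0)
  · intro u hu
    exact ((hder u hu).differentiableAt).continuousAt.continuousWithinAt
  · rw [interior_Ioi]
    intro u hu
    exact ((hder u hu).differentiableAt).differentiableWithinAt
  · rw [interior_Ioi]
    intro u hu
    rw [(hder u hu).deriv]
    have hu0 : (0:ℝ) < u := hu
    have hs : u < Real.sinh u := Real.self_lt_sinh_iff.2 hu0
    have hc1 : 1 ≤ Real.cosh u := Real.one_le_cosh u
    have hsn : 0 < Real.sinh u := by linarith
    have hsq : Real.cosh u ^ 2 = Real.sinh u ^ 2 + 1 := Real.cosh_sq u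
    apply div_nonpos_of_nonpos_of_nonneg _ (by positivity)
    have h1 : u ≤ Real.sinh u * Real.cosh u :=
      le_trans hs.le (le_mul_of_one_le_right hsn.le hc1)
    have key : Real.sinh u * Real.cosh u + 3 * u * Real.sinh u ^ 2 - u * Real.cosh u ^ 2 ≥ 0 := by
      nlinarith [mul_pos hu0 (mul_pos hsn hsn)]
    nlinarith [mul_nonneg (sq_nonneg (Real.cosh u)) key]

/-- derivative of the composed function -/
lemma hasDerivAt_comp (c t x : ℝ) (hc : 0 < c) (ht : 0 ≤ t) (hx : 0 < x) :
    HasDerivAt (fun x => Real.tanh (c * Real.sqrt (t + x)) ^ 2)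
      (c ^ 2 * haux (c * Real.sqrt (t + x))) x := by
  have htx : 0 < t + x := by linarith
  have hs : 0 < Real.sqrt (t + x) := Real.sqrt_pos.2 htx
  have h1 : HasDerivAt (fun x => t + x) 1 x := by
    simpa using (hasDerivAt_id x).const_add t
  have h2 : HasDerivAt (fun x => Real.sqrt (t + x)) (1 / (2 * Real.sqrt (t + x)) * 1) x :=
    (Real.hasDerivAt_sqrt htx.ne').comp x h1
  have h3 : HasDerivAt (fun x => c * Real.sqrt (t + x))
      (c * (1 / (2 * Real.sqrt (t + x)) * 1)) x := h2.const_mul c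
  have h4 := (hasDerivAt_tanh_sq (c * Real.sqrt (t + x))).comp x h3
  refine h4.congr_deriv ?_
  unfold haux
  have hcs : Real.cosh (c * Real.sqrt (t + x)) ≠ 0 := (Real.cosh_pos _).ne'
  field_simp

theorem tanh_sq_diff_nonneg_antitone (a b c : ℝ) (hab : b ≤ a) (hb : 0 ≤ b) (hc : 0 < c) :
    (∀ x ∈ Set.Ioi (0:ℝ),
      0 ≤ Real.tanh (c * Real.sqrt (a + x)) ^ 2 - Real.tanh (c * Real.sqrt (b + x)) ^ 2) ∧
    AntitoneOn
      (fun x => Real.tanh (c * Real.sqrt (a + x)) ^ 2 - Real.tanh (c * Real.sqrt (b + x)) ^ 2)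
      (Set.Ioi (0:ℝ)) := by
  have ha : 0 ≤ a := le_trans hb hab
  constructor
  · intro x hx
    have hx0 : (0:ℝ) < x := hx
    rw [sub_nonneg, tanh_sq_eq, tanh_sq_eq, sub_le_sub_iff_left]
    apply inv_anti₀
    · positivity
    · apply pow_le_pow_left₀ (Real.cosh_pos _).le
      rw [Real.cosh_le_cosh]
      have h1 : 0 ≤ c * Real.sqrt (b + x) := by positivity
      have h2 : 0 ≤ c * Real.sqrt (a + x) := by positivity
      rw [abs_of_nonneg h1, abs_of_nonneg h2]
      apply mul_le_mul_of_nonneg_left _ hc.le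
      exact Real.sqrt_le_sqrt (by linarith)
  · have hder : ∀ x ∈ Set.Ioi (0:ℝ), HasDerivAt
        (fun x => Real.tanh (c * Real.sqrt (a + x)) ^ 2 - Real.tanh (c * Real.sqrt (b + x)) ^ 2)
        (c ^ 2 * haux (c * Real.sqrt (a + x)) - c ^ 2 * haux (c * Real.sqrt (b + x))) x := by
      intro x hx
      exact (hasDerivAt_comp c a x hc ha hx).sub (hasDerivAt_comp c b x hc hb hx)
    apply antitoneOn_of_deriv_nonpos (convex_Ioi 0)
    · intro x hx
      exact ((hder x hx).differentiableAt).continuousAt.continuousWithinAt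
    · rw [interior_Ioi]
      intro x hx
      exact ((hder x hx).differentiableAt).differentiableWithinAt
    · rw [interior_Ioi]
      intro x hx
      rw [(hder x hx).deriv]
      have hx0 : (0:ℝ) < x := hx
      have hub : 0 < c * Real.sqrt (b + x) := by positivity
      have hua : c * Real.sqrt (b + x) ≤ c * Real.sqrt (a + x) :=
        mul_le_mul_of_nonneg_left (Real.sqrt_le_sqrt (by linarith)) hc.le
      have := haux_anti (Set.mem_Ioi.2 hub) (Set.mem_Ioi.2 (lt_of_lt_of_le hub hua)) hua
      nlinarith [sq_nonneg c]
end

section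
/- Let g : ℝ → ℝ be a nonnegative, even, Lebesgue-integrable probability density that is non-increasing on [0, ∞), and let f : ℝ → ℝ be an odd measurable function with f ≥ 0 on [0, ∞) such that x ↦ f(a + x)·g(x) is integrable. Then for every a ≥ 0, ∫_ℝ f(a + x)·g(x) dx ≥ 0. -/
open MeasureTheory

theorem integral_odd_shift_nonneg (f g : ℝ → ℝ)
    (hg0 : ∀ x, 0 ≤ g x)
    (hge : ∀ x : ℝ, g (-x) = g x)
    (hgint : Integrable g)
    (hgprob : ∫ x, g x = 1)
    (hgmono : AntitoneOn g (Set.Ici (0:ℝ)))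
    (hfodd : ∀ x : ℝ, f (-x) = - f x)
    (hfmeas : Measurable f)
    (hf0 : ∀ x : ℝ, 0 ≤ x → 0 ≤ f x)
    (a : ℝ) (ha : 0 ≤ a)
    (hint : Integrable (fun x => f (a + x) * g x)) :
    0 ≤ ∫ x, f (a + x) * g x := by
  -- g decreases in |·|
  have gabs : ∀ u v : ℝ, |u| ≤ |v| → g v ≤ g u := by
    intro u v h
    have hu : g u = g |u| := by
      rcases abs_choice u with h' | h'
      · rw [h']
      · rw [h', hge]
    have hv : g v = g |v| := by
      rcases abs_choice v with h' | h'
      · rw [h']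
      · rw [h', hge]
    rw [hu, hv]
    exact hgmono (abs_nonneg u) (abs_nonneg v) h
  set F : ℝ → ℝ := fun x => f (a + x) * g x with hF
  -- substitution x ↦ -(x + 2a)
  have hsub : ∫ x, F x = ∫ x, F (-(2*a) - x) := by
    exact (integral_sub_left_eq_self F volume (-(2*a))).symm
  have hptw : ∀ x : ℝ, F (-(2*a) - x) = -(f (a + x) * g (2*a + x)) := by
    intro x
    have h1 : a + (-(2*a) - x) = -(a + x) := by ring
    have h2 : -(2*a) - x = -(2*a + x) := by ring
    show f (a + (-(2*a) - x)) * g (-(2*a) - x) = _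
    rw [h1, h2, hfodd, hge]
    ring
  have hJ : ∫ x, F x = - ∫ x, f (a + x) * g (2*a + x) := by
    rw [hsub]
    simp_rw [hptw]
    rw [integral_neg]
  -- integrability of the shifted integrand
  have hintJ : Integrable (fun x => f (a + x) * g (2*a + x)) := by
    have : Integrable (fun x => F (-(2*a) - x)) := hint.comp_sub_left (-(2*a))
    apply (this.neg).congr
    filter_upwards with x
    simp only [Pi.neg_apply]
    rw [hptw x]; ring
  -- pointwise nonnegativity of the symmetrized integrand
  have hpos : ∀ x : ℝ, 0 ≤ f (a + x) * g x - f (a + x) * g (2*a + x) := by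
    intro x
    have key : f (a + x) * (g x - g (2*a + x)) = f (a + x) * g x - f (a + x) * g (2*a + x) := by ring
    rw [← key]
    rcases le_or_gt (-a) x with h | h
    · have hf : 0 ≤ f (a + x) := hf0 _ (by linarith)
      have hg : g (2*a + x) ≤ g x := by
        apply gabs
        have : x^2 ≤ (2*a + x)^2 := by nlinarith
        exact sq_le_sq.mp (by nlinarith)
      exact mul_nonneg hf (by linarith)
    · have hf : f (a + x) ≤ 0 := by
        have := hf0 (-(a + x)) (by linarith)
        rw [hfodd] at this; linarith
      have hg : g x ≤ g (2*a + x) := by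
        apply gabs
        have : (2*a + x)^2 ≤ x^2 := by nlinarith
        exact sq_le_sq.mp (by nlinarith)
      exact mul_nonneg_of_nonpos_of_nonpos hf (by linarith)
  have hdiff : 0 ≤ ∫ x, (f (a + x) * g x - f (a + x) * g (2*a + x)) :=
    integral_nonneg fun x => hpos x
  rw [integral_sub hint hintJ] at hdiff
  have : ∫ x, F x = ∫ x, f (a + x) * g x := rfl
  linarith [hJ]
end

section
/- Let X be a real random variable whose distribution is symmetric (X and −X have the same law). Let f : ℝ → ℝ be an odd measurable function with f ≥ 0 on [0, ∞), and let g : ℝ → ℝ be an even measurable function that is non-increasing on [0, ∞). Assume E[f(X)²] < ∞ and sup_{a ≥ 0} E[g(a + X)²] < ∞. Then for every a ≥ 0, E[f(X)·g(a + X)] ≤ 0. -/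
open MeasureTheory

theorem expectation_odd_times_even_nonpos
    {Ω : Type*} [MeasurableSpace Ω] (μ : Measure Ω) [IsProbabilityMeasure μ]
    (X : Ω → ℝ) (hX : Measurable X)
    (hsym : Measure.map X μ = Measure.map (fun ω => - X ω) μ)
    (f g : ℝ → ℝ) (hfmeas : Measurable f) (hgmeas : Measurable g)
    (hfodd : ∀ x : ℝ, f (-x) = - f x)
    (hf0 : ∀ x : ℝ, 0 ≤ x → 0 ≤ f x)
    (hgeven : ∀ x : ℝ, g (-x) = g x)
    (hgmono : AntitoneOn g (Set.Ici (0:ℝ)))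
    (hf2 : Integrable (fun ω => (f (X ω)) ^ 2) μ)
    (C : ℝ)
    (hg2int : ∀ a : ℝ, 0 ≤ a → Integrable (fun ω => (g (a + X ω)) ^ 2) μ)
    (hg2 : ∀ a : ℝ, 0 ≤ a → ∫ ω, (g (a + X ω)) ^ 2 ∂μ ≤ C) :
    ∀ a : ℝ, 0 ≤ a → ∫ ω, f (X ω) * g (a + X ω) ∂μ ≤ 0 := by
  intro a ha
  have hXmeas : AEMeasurable X μ := hX.aemeasurable
  have hnegmeas : AEMeasurable (fun ω => -X ω) μ := hX.neg.aemeasurable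
  -- transfer lemmas via symmetry
  have hmapint : ∀ (φ : ℝ → ℝ), Measurable φ →
      (Integrable (fun ω => φ (X ω)) μ ↔ Integrable (fun ω => φ (- X ω)) μ) := by
    intro φ hφ
    rw [show (fun ω => φ (X ω)) = φ ∘ X from rfl,
      show (fun ω => φ (-X ω)) = φ ∘ (fun ω => -X ω) from rfl,
      ← integrable_map_measure hφ.aestronglyMeasurable hXmeas, hsym,
      integrable_map_measure hφ.aestronglyMeasurable hnegmeas]
  have hmapeq : ∀ (φ : ℝ → ℝ), Measurable φ →
      ∫ ω, φ (X ω) ∂μ = ∫ ω, φ (-X ω) ∂μ := by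
    intro φ hφ
    rw [← integral_map hXmeas hφ.aestronglyMeasurable, hsym,
      integral_map hnegmeas hφ.aestronglyMeasurable]
  -- g composed with abs
  have gabs : ∀ x : ℝ, g |x| = g x := by
    intro x
    rcases abs_cases x with ⟨h1, _⟩ | ⟨h1, _⟩
    · rw [h1]
    · rw [h1, hgeven]
  -- key monotonicity fact
  have key : ∀ t : ℝ, 0 ≤ t → g (a + t) ≤ g (a - t) := by
    intro t ht
    rw [← gabs (a - t)]
    exact hgmono (Set.mem_Ici.mpr (abs_nonneg _)) (Set.mem_Ici.mpr (by positivity))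
      (abs_le.mpr ⟨by linarith, by linarith⟩)
  -- pointwise sign
  have ptwise : ∀ x : ℝ, f x * (g (a + x) - g (a - x)) ≤ 0 := by
    intro x
    rcases le_or_gt 0 x with hx | hx
    · have h1 := key x hx
      have h2 := hf0 x hx
      nlinarith
    · have hx' : 0 ≤ -x := by linarith
      have h1 := key (-x) hx'
      have h2 := hf0 (-x) hx'
      have hfx : f x = - f (-x) := by rw [hfodd]; ring
      have e1 : a + x = a - (-x) := by ring
      have e2 : a - x = a + (-x) := by ring
      rw [hfx, e1, e2]
      nlinarith
  -- integrability of products via AM-GM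
  have hprod : ∀ (G : Ω → ℝ), Integrable (fun ω => (G ω) ^ 2) μ →
      AEStronglyMeasurable G μ → Integrable (fun ω => f (X ω) * G ω) μ := by
    intro G hGsq hGm
    refine Integrable.mono' ((hf2.add hGsq).div_const 2)
      (((hfmeas.comp hX).aestronglyMeasurable).mul hGm)
      (Filter.Eventually.of_forall fun ω => ?_)
    have h := sq_nonneg (|f (X ω)| - |G ω|)
    have h2 := sq_abs (f (X ω))
    have h3 := sq_abs (G ω)
    rw [Real.norm_eq_abs, abs_mul]
    simp only [Pi.add_apply]
    nlinarith
  have hG'sq : Integrable (fun ω => (g (a - X ω)) ^ 2) μ := by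
    have h := (hmapint (fun x => (g (a + x)) ^ 2)
      ((hgmeas.comp (measurable_const.add measurable_id)).pow_const 2)).mp (hg2int a ha)
    simpa [sub_eq_add_neg] using h
  have hI : Integrable (fun ω => f (X ω) * g (a + X ω)) μ :=
    hprod _ (hg2int a ha) ((hgmeas.comp (measurable_const.add hX)).aestronglyMeasurable)
  have hI' : Integrable (fun ω => f (X ω) * g (a - X ω)) μ :=
    hprod _ hG'sq ((hgmeas.comp (measurable_const.sub hX)).aestronglyMeasurable)
  -- symmetry identity
  have hφmeas : Measurable (fun x : ℝ => f x * g (a + x)) :=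
    hfmeas.mul (hgmeas.comp (measurable_const.add measurable_id))
  have hsymeq : ∫ ω, f (X ω) * g (a + X ω) ∂μ
      = - ∫ ω, f (X ω) * g (a - X ω) ∂μ := by
    have h := hmapeq (fun x => f x * g (a + x)) hφmeas
    rw [h]
    have heq : ∀ ω, f (-X ω) * g (a + -X ω) = -(f (X ω) * g (a - X ω)) := by
      intro ω
      have e : a + -X ω = a - X ω := by ring
      rw [hfodd, e]
      ring
    simp_rw [heq]
    rw [integral_neg]
  have hdiff : ∫ ω, (f (X ω) * (g (a + X ω) - g (a - X ω))) ∂μ ≤ 0 :=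
    integral_nonpos fun ω => ptwise (X ω)
  have hsplit : ∫ ω, (f (X ω) * (g (a + X ω) - g (a - X ω))) ∂μ
      = ∫ ω, f (X ω) * g (a + X ω) ∂μ - ∫ ω, f (X ω) * g (a - X ω) ∂μ := by
    simp_rw [mul_sub]
    exact integral_sub hI hI'
  rw [hsplit, hsymeq] at hdiff
  linarith [hdiff, hsymeq]
end

section
/- Let X be a real random variable with an even density that is non-increasing on [0, ∞), and let g : ℝ → ℝ be a smooth, positive, even function, non-decreasing on [0, ∞), such that t ↦ g(t)/cosh(t) is non-increasing on [0, ∞), with sup_{t ≥ 0} E[|g′(t + X)| + g(t + X)] < ∞. Then for every t ≥ 0: 0 ≤ E[g(t + X)·tanh(t + X)] ≤ E[g(t + X)]·tanh(t). -/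
open MeasureTheory

theorem expectation_g_tanh_bounds (w g : ℝ → ℝ)
    (hw0 : ∀ x, 0 ≤ w x)
    (hwe : ∀ x : ℝ, w (-x) = w x)
    (hwint : Integrable w)
    (hwprob : ∫ x, w x = 1)
    (hwmono : AntitoneOn w (Set.Ici (0:ℝ)))
    (hg : ContDiff ℝ (⊤ : ℕ∞) g)
    (hgpos : ∀ x, 0 < g x)
    (hge : ∀ x : ℝ, g (-x) = g x)
    (hgmono : MonotoneOn g (Set.Ici (0:ℝ)))
    (hratio : AntitoneOn (fun t => g t / Real.cosh t) (Set.Ici (0:ℝ)))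
    (C : ℝ)
    (hbint : ∀ t : ℝ, Integrable (fun x => (|deriv g (t + x)| + g (t + x)) * w x))
    (hbound : ∀ t : ℝ, 0 ≤ t → ∫ x, (|deriv g (t + x)| + g (t + x)) * w x ≤ C)
    (hint1 : ∀ t : ℝ, Integrable (fun x => g (t + x) * Real.tanh (t + x) * w x))
    (hint2 : ∀ t : ℝ, Integrable (fun x => g (t + x) * w x)) :
    ∀ t : ℝ, 0 ≤ t →
      0 ≤ ∫ x, g (t + x) * Real.tanh (t + x) * w x ∧
      ∫ x, g (t + x) * Real.tanh (t + x) * w x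
        ≤ (∫ x, g (t + x) * w x) * Real.tanh t := by
  -- basic facts about tanh
  have htanh_mono : Monotone Real.tanh := by
    intro a b hab
    rw [Real.tanh_eq_sinh_div_cosh, Real.tanh_eq_sinh_div_cosh,
      div_le_div_iff₀ (Real.cosh_pos a) (Real.cosh_pos b)]
    have h1 : 0 ≤ Real.sinh (b - a) := Real.sinh_nonneg_iff.mpr (by linarith)
    rw [Real.sinh_sub] at h1
    linarith
  have htanh_nonneg : ∀ u : ℝ, 0 ≤ u → 0 ≤ Real.tanh u := by
    intro u hu
    rw [Real.tanh_eq_sinh_div_cosh]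
    exact div_nonneg (Real.sinh_nonneg_iff.mpr hu) (Real.cosh_pos u).le
  have htanh_nonpos : ∀ u : ℝ, u ≤ 0 → Real.tanh u ≤ 0 := by
    intro u hu
    have := htanh_nonneg (-u) (by linarith)
    rw [Real.tanh_neg] at this
    linarith
  -- h(u) = g(u) * tanh(u) is monotone on ℝ
  have hmono : ∀ a b : ℝ, a ≤ b → g a * Real.tanh a ≤ g b * Real.tanh b := by
    intro a b hab
    rcases le_total 0 a with ha | ha
    · have hb : (0:ℝ) ≤ b := ha.trans hab
      exact mul_le_mul (hgmono (Set.mem_Ici.mpr ha) (Set.mem_Ici.mpr hb) hab)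
        (htanh_mono hab) (htanh_nonneg a ha) (hgpos b).le
    · rcases le_total 0 b with hb | hb
      · have h1 : g a * Real.tanh a ≤ 0 :=
          mul_nonpos_iff.2 (Or.inl ⟨(hgpos a).le, htanh_nonpos a ha⟩)
        have h2 : 0 ≤ g b * Real.tanh b := mul_nonneg (hgpos b).le (htanh_nonneg b hb)
        linarith
      · have key : g (-b) * Real.tanh (-b) ≤ g (-a) * Real.tanh (-a) :=
          mul_le_mul (hgmono (Set.mem_Ici.mpr (by linarith)) (Set.mem_Ici.mpr (by linarith))
            (by linarith)) (htanh_mono (by linarith))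
            (htanh_nonneg _ (by linarith)) (hgpos _).le
        rw [hge, hge, Real.tanh_neg, Real.tanh_neg] at key
        linarith
  -- key algebraic identity
  have hkey : ∀ a b : ℝ, g (a + b) * (Real.tanh (a + b) - Real.tanh a)
      = (Real.sinh b / Real.cosh a) * (g (a + b) / Real.cosh (a + b)) := by
    intro a b
    have hs : Real.sinh b = Real.sinh (a + b) * Real.cosh a - Real.cosh (a + b) * Real.sinh a := by
      rw [← Real.sinh_sub]; ring_nf
    rw [Real.tanh_eq_sinh_div_cosh, Real.tanh_eq_sinh_div_cosh, hs]
    have h1 := (Real.cosh_pos a).ne'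
    have h2 := (Real.cosh_pos (a + b)).ne'
    field_simp
  intro t ht
  -- ratio comparison
  have hphi : ∀ x : ℝ, 0 ≤ x →
      g (t + x) / Real.cosh (t + x) ≤ g (t - x) / Real.cosh (t - x) := by
    intro x hx
    rcases le_total x t with hxt | hxt
    · exact hratio (Set.mem_Ici.mpr (by linarith)) (Set.mem_Ici.mpr (by linarith)) (by linarith)
    · have e : g (t - x) / Real.cosh (t - x) = g (x - t) / Real.cosh (x - t) := by
        have : t - x = -(x - t) := by ring
        rw [this, hge, Real.cosh_neg]
      rw [e]
      exact hratio (Set.mem_Ici.mpr (by linarith)) (Set.mem_Ici.mpr (by linarith)) (by linarith)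
  -- pointwise lower bound
  have hlow_pt : ∀ x : ℝ,
      0 ≤ g (t + x) * Real.tanh (t + x) + g (t - x) * Real.tanh (t - x) := by
    intro x
    have h1 := hmono (x - t) (t + x) (by linarith)
    have e : g (x - t) * Real.tanh (x - t) = -(g (t - x) * Real.tanh (t - x)) := by
      have hxt : x - t = -(t - x) := by ring
      rw [hxt, hge, Real.tanh_neg]; ring
    rw [e] at h1
    linarith
  -- pointwise upper bound
  have hupper_nn : ∀ x : ℝ, 0 ≤ x →
      g (t + x) * (Real.tanh (t + x) - Real.tanh t)
        + g (t - x) * (Real.tanh (t - x) - Real.tanh t) ≤ 0 := by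
    intro x hx
    have e1 := hkey t x
    have e2 := hkey t (-x)
    rw [show t + -x = t - x by ring, Real.sinh_neg] at e2
    rw [e1, e2]
    have hct := (Real.cosh_pos t).le
    have hs : 0 ≤ Real.sinh x := Real.sinh_nonneg_iff.mpr hx
    have hrw : Real.sinh x / Real.cosh t * (g (t + x) / Real.cosh (t + x))
        + -Real.sinh x / Real.cosh t * (g (t - x) / Real.cosh (t - x))
        = (Real.sinh x / Real.cosh t)
            * (g (t + x) / Real.cosh (t + x) - g (t - x) / Real.cosh (t - x)) := by ring
    rw [hrw]
    exact mul_nonpos_iff.2 (Or.inl ⟨div_nonneg hs hct, by linarith [hphi x hx]⟩)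
  have hupper_pt : ∀ x : ℝ,
      g (t + x) * (Real.tanh (t + x) - Real.tanh t)
        + g (t - x) * (Real.tanh (t - x) - Real.tanh t) ≤ 0 := by
    intro x
    rcases le_total 0 x with hx | hx
    · exact hupper_nn x hx
    · have := hupper_nn (-x) (by linarith)
      rw [show t + -x = t - x by ring, show t - -x = t + x by ring] at this
      linarith
  -- integrability and integral identities for reflected functions
  have heq1 : (fun x => g (t + -x) * Real.tanh (t + -x) * w (-x))
      = fun x => g (t - x) * Real.tanh (t - x) * w x := by
    funext x; rw [hwe, ← sub_eq_add_neg]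
  have heq2 : (fun x => g (t + -x) * w (-x)) = fun x => g (t - x) * w x := by
    funext x; rw [hwe, ← sub_eq_add_neg]
  have hi1n : Integrable (fun x => g (t - x) * Real.tanh (t - x) * w x) := by
    have := (hint1 t).comp_neg
    rwa [heq1] at this
  have hi2n : Integrable (fun x => g (t - x) * w x) := by
    have := (hint2 t).comp_neg
    rwa [heq2] at this
  have hI1n : ∫ x, g (t - x) * Real.tanh (t - x) * w x
      = ∫ x, g (t + x) * Real.tanh (t + x) * w x := by
    rw [← heq1]
    exact integral_neg_eq_self (fun x => g (t + x) * Real.tanh (t + x) * w x) volume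
  have hI2n : ∫ x, g (t - x) * w x = ∫ x, g (t + x) * w x := by
    rw [← heq2]
    exact integral_neg_eq_self (fun x => g (t + x) * w x) volume
  -- lower bound
  have hlow : 0 ≤ ∫ x, g (t + x) * Real.tanh (t + x) * w x := by
    have hnn : 0 ≤ ∫ x, (g (t + x) * Real.tanh (t + x) * w x
        + g (t - x) * Real.tanh (t - x) * w x) := by
      apply integral_nonneg
      intro x
      simp only [Pi.zero_apply]
      nlinarith [mul_nonneg (hlow_pt x) (hw0 x)]
    rw [integral_add (hint1 t) hi1n, hI1n] at hnn
    linarith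
  refine ⟨hlow, ?_⟩
  -- upper bound
  have hup : ∫ x, (g (t + x) * (Real.tanh (t + x) - Real.tanh t)
      + g (t - x) * (Real.tanh (t - x) - Real.tanh t)) * w x ≤ 0 := by
    apply integral_nonpos
    intro x
    simp only [Pi.zero_apply]
    exact mul_nonpos_iff.2 (Or.inr ⟨hupper_pt x, hw0 x⟩)
  have hexpand : (fun x => (g (t + x) * (Real.tanh (t + x) - Real.tanh t)
      + g (t - x) * (Real.tanh (t - x) - Real.tanh t)) * w x)
      = fun x => (g (t + x) * Real.tanh (t + x) * w x + g (t - x) * Real.tanh (t - x) * w x)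
        - Real.tanh t * (g (t + x) * w x + g (t - x) * w x) := by
    funext x; ring
  have isum1 : Integrable (fun x => g (t + x) * Real.tanh (t + x) * w x
      + g (t - x) * Real.tanh (t - x) * w x) := (hint1 t).add hi1n
  have isum2 : Integrable (fun x => Real.tanh t * (g (t + x) * w x + g (t - x) * w x)) :=
    ((hint2 t).add hi2n).const_mul _
  rw [hexpand, integral_sub isum1 isum2, integral_add (hint1 t) hi1n, integral_const_mul,
    integral_add (hint2 t) hi2n, hI1n, hI2n] at hup
  linarith
end

section
/- Let X be a real random variable with an even density non-increasing on [0, ∞), and let g : ℝ → ℝ be a smooth, positive, even function, non-decreasing on [0, ∞), satisfying sup_{t ≥ 0} E[|g′(t + X)| + g(t + X)] < ∞ and such that t ↦ g(t)/cosh(t) is non-increasing on [0, ∞). Then for every m ∈ [0, 1], the function t ↦ (E[g(t + X)])^m / cosh(t) is non-increasing on [0, ∞). -/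
open MeasureTheory

private lemma deriv_nonpos_of_antitoneOn' {f : ℝ → ℝ} {d y : ℝ} (hy : 0 < y)
    (hf : AntitoneOn f (Set.Ici (0:ℝ))) (hd : HasDerivAt f d y) : d ≤ 0 := by
  have h := hasDerivAt_iff_tendsto_slope.mp hd
  have h2 : Filter.Tendsto (slope f y) (nhdsWithin y (Set.Ioi y)) (nhds d) :=
    h.mono_left (nhdsWithin_mono _ (fun z hz => ne_of_gt hz))
  refine le_of_tendsto h2 ?_
  filter_upwards [self_mem_nhdsWithin] with z hz
  rw [slope_def_field]
  apply div_nonpos_of_nonpos_of_nonneg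
  · have hz' : (0:ℝ) < z := lt_trans hy hz
    have := hf (Set.mem_Ici.mpr hy.le) (Set.mem_Ici.mpr hz'.le) (le_of_lt hz)
    linarith
  · have : y < z := hz
    linarith

private lemma deriv_nonneg_of_monotoneOn' {f : ℝ → ℝ} {d y : ℝ} (hy : 0 < y)
    (hf : MonotoneOn f (Set.Ici (0:ℝ))) (hd : HasDerivAt f d y) : 0 ≤ d := by
  have h := hasDerivAt_iff_tendsto_slope.mp hd
  have h2 : Filter.Tendsto (slope f y) (nhdsWithin y (Set.Ioi y)) (nhds d) :=
    h.mono_left (nhdsWithin_mono _ (fun z hz => ne_of_gt hz))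
  refine ge_of_tendsto h2 ?_
  filter_upwards [self_mem_nhdsWithin] with z hz
  rw [slope_def_field]
  apply div_nonneg
  · have hz' : (0:ℝ) < z := lt_trans hy hz
    have := hf (Set.mem_Ici.mpr hy.le) (Set.mem_Ici.mpr hz'.le) (le_of_lt hz)
    linarith
  · have : y < z := hz
    linarith

private lemma symm_integral_nonpos {ψ : ℝ → ℝ} (hint : Integrable ψ)
    (hsym : ∀ x, ψ x + ψ (-x) ≤ 0) : ∫ x, ψ x ≤ 0 := by
  have e : (∫ x, ψ x) = ∫ x, ψ (-x) := (integral_neg_eq_self ψ volume).symm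
  have h2 : (∫ x, ψ x) + (∫ x, ψ x) = ∫ x, (ψ x + ψ (-x)) := by
    nth_rewrite 2 [e]
    rw [← integral_add hint hint.comp_neg]
  have h3 : (∫ x, (ψ x + ψ (-x))) ≤ 0 := integral_nonpos hsym
  linarith

theorem pow_expectation_div_cosh_antitone (w g : ℝ → ℝ)
    (hw0 : ∀ x, 0 ≤ w x)
    (hwe : ∀ x : ℝ, w (-x) = w x)
    (hwint : Integrable w)
    (hwprob : ∫ x, w x = 1)
    (hwmono : AntitoneOn w (Set.Ici (0:ℝ)))
    (hg : ContDiff ℝ (⊤ : ℕ∞) g)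
    (hgpos : ∀ x, 0 < g x)
    (hge : ∀ x : ℝ, g (-x) = g x)
    (hgmono : MonotoneOn g (Set.Ici (0:ℝ)))
    (hratio : AntitoneOn (fun t => g t / Real.cosh t) (Set.Ici (0:ℝ)))
    (C : ℝ)
    (hbint : ∀ t : ℝ, Integrable (fun x => (|deriv g (t + x)| + g (t + x)) * w x))
    (hbound : ∀ t : ℝ, 0 ≤ t → ∫ x, (|deriv g (t + x)| + g (t + x)) * w x ≤ C)
    (hint2 : ∀ t : ℝ, Integrable (fun x => g (t + x) * w x)) :
    ∀ m : ℝ, m ∈ Set.Icc (0:ℝ) 1 →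
      AntitoneOn (fun t => (∫ x, g (t + x) * w x) ^ m / Real.cosh t)
        (Set.Ici (0:ℝ)) := by
  -- basic facts about g
  have hgdiff : Differentiable ℝ g := hg.differentiable (by simp)
  have hg' : Continuous (deriv g) := hg.continuous_deriv (by simp)
  have hodd : ∀ x : ℝ, deriv g (-x) = - deriv g x := by
    intro x
    have h1 : deriv (fun y : ℝ => g (-y)) x = - deriv g (-x) := deriv_comp_neg g x
    have h2 : (fun y : ℝ => g (-y)) = g := funext hge
    rw [h2] at h1
    linarith
  have hd0 : deriv g 0 = 0 := by
    have := hodd 0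
    simp only [neg_zero] at this
    linarith
  -- |·| versions of evenness/monotonicity
  have gabs : ∀ a : ℝ, g |a| = g a := by
    intro a
    rcases abs_choice a with h | h
    · rw [h]
    · rw [h, hge]
  have wabs : ∀ a : ℝ, w |a| = w a := by
    intro a
    rcases abs_choice a with h | h
    · rw [h]
    · rw [h, hwe]
  have gmono_abs : ∀ a b : ℝ, |a| ≤ |b| → g a ≤ g b := by
    intro a b hab
    rw [← gabs a, ← gabs b]
    exact hgmono (Set.mem_Ici.mpr (abs_nonneg a)) (Set.mem_Ici.mpr (abs_nonneg b)) hab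
  have wmono_abs : ∀ a b : ℝ, |a| ≤ |b| → w b ≤ w a := by
    intro a b hab
    rw [← wabs a, ← wabs b]
    exact hwmono (Set.mem_Ici.mpr (abs_nonneg a)) (Set.mem_Ici.mpr (abs_nonneg b)) hab
  have hratio_abs : ∀ a b : ℝ, |a| ≤ |b| → g b / Real.cosh b ≤ g a / Real.cosh a := by
    intro a b hab
    have ea : g |a| / Real.cosh |a| = g a / Real.cosh a := by rw [gabs, Real.cosh_abs]
    have eb : g |b| / Real.cosh |b| = g b / Real.cosh b := by rw [gabs, Real.cosh_abs]
    rw [← ea, ← eb]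
    exact hratio (Set.mem_Ici.mpr (abs_nonneg a)) (Set.mem_Ici.mpr (abs_nonneg b)) hab
  -- the function k
  set k : ℝ → ℝ := fun y => deriv g y - g y * (Real.sinh y / Real.cosh y) with hk_def
  have kodd : ∀ y : ℝ, k (-y) = - k y := by
    intro y
    simp only [hk_def, hodd, hge, Real.sinh_neg, Real.cosh_neg]
    ring
  have hkneg : ∀ y : ℝ, 0 ≤ y → k y ≤ 0 := by
    intro y hy
    rcases hy.lt_or_eq with hy | hy
    · have hq : HasDerivAt (fun z => g z / Real.cosh z)
          ((deriv g y * Real.cosh y - g y * Real.sinh y) / Real.cosh y ^ 2) y :=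
        (hgdiff y).hasDerivAt.div (Real.hasDerivAt_cosh y) (Real.cosh_pos y).ne'
      have h0 := deriv_nonpos_of_antitoneOn' hy hratio hq
      have hky : k y = ((deriv g y * Real.cosh y - g y * Real.sinh y) / Real.cosh y ^ 2)
          * Real.cosh y := by
        simp only [hk_def]
        field_simp
      rw [hky]
      exact mul_nonpos_of_nonpos_of_nonneg h0 (Real.cosh_pos y).le
    · simp only [hk_def, ← hy, hd0, Real.sinh_zero]
      simp
  have hgderiv_nonneg : ∀ y : ℝ, 0 ≤ y → 0 ≤ deriv g y := by
    intro y hy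
    rcases hy.lt_or_eq with hy | hy
    · exact deriv_nonneg_of_monotoneOn' hy hgmono (hgdiff y).hasDerivAt
    · rw [← hy, hd0]
  have habsd : ∀ y : ℝ, |deriv g y| ≤ g y := by
    have key : ∀ y : ℝ, 0 ≤ y → |deriv g y| ≤ g y := by
      intro y hy
      rw [abs_of_nonneg (hgderiv_nonneg y hy)]
      have h1 := hkneg y hy
      have h2 : Real.sinh y / Real.cosh y ≤ 1 :=
        (div_le_one (Real.cosh_pos y)).mpr (Real.sinh_lt_cosh y).le
      have h3 : g y * (Real.sinh y / Real.cosh y) ≤ g y * 1 :=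
        mul_le_mul_of_nonneg_left h2 (hgpos y).le
      simp only [hk_def] at h1
      linarith
    intro y
    rcases le_total 0 y with hy | hy
    · exact key y hy
    · have h1 : deriv g y = - deriv g (-y) := by
        have := hodd (-y); simp only [neg_neg] at this; linarith
      rw [h1, abs_neg, ← hge y]
      exact key (-y) (by linarith)
  -- domination of g in a neighborhood
  have gexp : ∀ z : ℝ, 0 ≤ z → g (z + 1) ≤ Real.exp 1 * g z := by
    intro z hz
    have h1 : g (z + 1) / Real.cosh (z + 1) ≤ g z / Real.cosh z :=
      hratio (Set.mem_Ici.mpr hz) (Set.mem_Ici.mpr (by linarith)) (by linarith)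
    have h2 : Real.cosh (z + 1) ≤ Real.exp 1 * Real.cosh z := by
      rw [Real.cosh_add]
      have hs : Real.sinh z ≤ Real.cosh z := (Real.sinh_lt_cosh z).le
      have hs1 : (0:ℝ) ≤ Real.sinh 1 := Real.sinh_nonneg_iff.mpr zero_le_one
      have he : Real.cosh 1 + Real.sinh 1 = Real.exp 1 := Real.cosh_add_sinh 1
      nlinarith [Real.cosh_pos z]
    calc g (z + 1) = g (z + 1) / Real.cosh (z + 1) * Real.cosh (z + 1) := by
          field_simp
      _ ≤ g z / Real.cosh z * (Real.exp 1 * Real.cosh z) := by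
          apply mul_le_mul h1 h2 (Real.cosh_pos _).le
          exact div_nonneg (hgpos z).le (Real.cosh_pos z).le
      _ = Real.exp 1 * g z := by field_simp
  have gdom : ∀ t τ x : ℝ, |τ - t| ≤ 1 → g (τ + x) ≤ Real.exp 1 * g (t + x) := by
    intro t τ x hτ
    have h1 : |τ + x| ≤ |t + x| + 1 := by
      calc |τ + x| = |(t + x) + (τ - t)| := by ring_nf
        _ ≤ |t + x| + |τ - t| := abs_add_le _ _
        _ ≤ |t + x| + 1 := by linarith
    calc g (τ + x) = g |τ + x| := (gabs _).symm
      _ ≤ g (|t + x| + 1) := hgmono (Set.mem_Ici.mpr (abs_nonneg _))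
          (Set.mem_Ici.mpr (by positivity)) h1
      _ ≤ Real.exp 1 * g |t + x| := gexp _ (abs_nonneg _)
      _ = Real.exp 1 * g (t + x) := by rw [gabs]
  -- differentiation under the integral sign
  have hFD : ∀ t : ℝ, Integrable (fun x => deriv g (t + x) * w x) ∧
      HasDerivAt (fun u => ∫ x, g (u + x) * w x) (∫ x, deriv g (t + x) * w x) t := by
    intro t
    apply hasDerivAt_integral_of_dominated_loc_of_deriv_le
      (F := fun τ x => g (τ + x) * w x)
      (F' := fun τ x => deriv g (τ + x) * w x)
      (bound := fun x => Real.exp 1 * (g (t + x) * w x)) (Metric.ball_mem_nhds t one_pos)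
    · exact Filter.Eventually.of_forall fun τ =>
        ((hg.continuous.comp (continuous_const.add continuous_id)).aestronglyMeasurable.mul
          hwint.1)
    · exact hint2 t
    · exact ((hg'.comp (continuous_const.add continuous_id)).aestronglyMeasurable.mul hwint.1)
    · refine Filter.Eventually.of_forall fun x τ hτ => ?_
      rw [Real.norm_eq_abs, abs_mul, abs_of_nonneg (hw0 x)]
      have hτ1 : |τ - t| ≤ 1 := by
        rw [Metric.mem_ball, Real.dist_eq] at hτ
        exact hτ.le
      have h1 : |deriv g (τ + x)| ≤ g (τ + x) := habsd _
      have h2 : g (τ + x) ≤ Real.exp 1 * g (t + x) := gdom t τ x hτ1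
      calc |deriv g (τ + x)| * w x ≤ (Real.exp 1 * g (t + x)) * w x :=
            mul_le_mul_of_nonneg_right (h1.trans h2) (hw0 x)
        _ = Real.exp 1 * (g (t + x) * w x) := by ring
    · exact (hint2 t).const_mul _
    · refine Filter.Eventually.of_forall fun x τ _ => ?_
      have h := ((hgdiff (τ + x)).hasDerivAt).comp τ ((hasDerivAt_id τ).add_const x)
      simpa using h.mul_const (w x)
  -- positivity of the expectation
  have hFpos : ∀ t : ℝ, 0 < ∫ x, g (t + x) * w x := by
    intro t
    have h0 : 0 ≤ ∫ x, g (t + x) * w x :=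
      integral_nonneg fun x => mul_nonneg (hgpos _).le (hw0 x)
    rcases h0.lt_or_eq with h | h
    · exact h
    · exfalso
      have hz := (integral_eq_zero_iff_of_nonneg
        (fun x => mul_nonneg (hgpos _).le (hw0 x)) (hint2 t)).mp h.symm
      have hw0' : w =ᵐ[volume] 0 := by
        filter_upwards [hz] with x hx
        have hx' : g (t + x) * w x = 0 := hx
        have := (mul_eq_zero.mp hx').resolve_left (hgpos (t + x)).ne'
        simpa using this
      have h1 : (1:ℝ) = 0 := by
        rw [← hwprob, integral_congr_ae hw0']
        simp
      exact one_ne_zero h1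
  -- the two key integral inequalities
  have hkeyA : ∀ t : ℝ, 0 ≤ t → (∫ x, k (t + x) * w x) ≤ 0 := by
    intro t ht
    have intA : Integrable (fun y => k y * w (y - t)) := by
      have intA0 : Integrable (fun x => k (t + x) * w x) := by
        apply (hbint t).mono
        · exact (((hg'.comp (continuous_const.add continuous_id)).sub
            ((hg.continuous.comp (continuous_const.add continuous_id)).mul
              (((Real.continuous_sinh.comp (continuous_const.add continuous_id)).div
                (Real.continuous_cosh.comp (continuous_const.add continuous_id))
                fun x => (Real.cosh_pos (t + x)).ne')))).aestronglyMeasurable.mul hwint.1)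
        · refine Filter.Eventually.of_forall fun x => ?_
          rw [Real.norm_eq_abs, Real.norm_eq_abs, abs_mul, abs_mul,
            abs_of_nonneg (hw0 x), abs_of_nonneg
              (by have := hgpos (t + x); positivity : (0:ℝ) ≤ |deriv g (t + x)| + g (t + x))]
          apply mul_le_mul_of_nonneg_right _ (hw0 x)
          have h2 : |Real.sinh (t + x) / Real.cosh (t + x)| ≤ 1 := by
            rw [abs_div, abs_of_pos (Real.cosh_pos _), Real.abs_sinh, ← Real.cosh_abs]
            exact (div_le_one (Real.cosh_pos _)).mpr (Real.sinh_lt_cosh _).le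
          have h3 : |g (t + x) * (Real.sinh (t + x) / Real.cosh (t + x))| ≤ g (t + x) := by
            rw [abs_mul, abs_of_pos (hgpos _)]
            calc g (t + x) * |Real.sinh (t + x) / Real.cosh (t + x)| ≤ g (t + x) * 1 :=
                  mul_le_mul_of_nonneg_left h2 (hgpos _).le
              _ = g (t + x) := mul_one _
          calc |k (t + x)| ≤ |deriv g (t + x)| +
                |g (t + x) * (Real.sinh (t + x) / Real.cosh (t + x))| := abs_sub _ _
            _ ≤ |deriv g (t + x)| + g (t + x) := by linarith
      have := intA0.comp_sub_right t
      refine this.congr (Filter.Eventually.of_forall fun y => ?_)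
      have hy : t + (y - t) = y := by ring
      simp only [hy]
    have eA1 : (∫ x, k (t + x) * w x) = ∫ y, k y * w (y - t) := by
      have h := integral_add_right_eq_self (μ := volume) (fun y => k y * w (y - t)) t
      rw [← h]
      congr 1
      funext x
      rw [add_sub_cancel_right, add_comm x t]
    rw [eA1]
    apply symm_integral_nonpos intA
    intro y
    have e1 : -y - t = -(y + t) := by ring
    rw [kodd, e1, hwe]
    have claim : k y * (w (y - t) - w (y + t)) ≤ 0 := by
      rcases le_total 0 y with hy | hy
      · have h1 : k y ≤ 0 := hkneg y hy
        have h2 : w (y + t) ≤ w (y - t) := by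
          apply wmono_abs
          rw [abs_of_nonneg (by linarith : (0:ℝ) ≤ y + t)]
          rw [abs_le]
          constructor <;> linarith
        exact mul_nonpos_of_nonpos_of_nonneg h1 (by linarith)
      · have h1 : 0 ≤ k y := by
          have := hkneg (-y) (by linarith)
          rw [kodd] at this
          linarith
        have h2 : w (y - t) ≤ w (y + t) := by
          apply wmono_abs
          rw [abs_of_nonpos (by linarith : y - t ≤ 0)]
          rw [abs_le]
          constructor <;> linarith
        exact mul_nonpos_of_nonneg_of_nonpos h1 (by linarith)
    nlinarith [claim]
  have hkeyB : ∀ t : ℝ, 0 ≤ t →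
      (∫ x, g (t + x) / Real.cosh (t + x) * Real.sinh x * w x) ≤ 0 := by
    intro t ht
    have intB : Integrable (fun x => g (t + x) / Real.cosh (t + x) * Real.sinh x * w x) := by
      apply ((hint2 t).const_mul (Real.exp t)).mono
      · exact ((((hg.continuous.comp (continuous_const.add continuous_id)).div
            (Real.continuous_cosh.comp (continuous_const.add continuous_id))
            fun x => (Real.cosh_pos (t + x)).ne').mul
            Real.continuous_sinh).aestronglyMeasurable.mul hwint.1)
      · refine Filter.Eventually.of_forall fun x => ?_
        have hsx : |Real.sinh x| ≤ Real.cosh (t + x) * Real.exp t := by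
          have e : Real.sinh x =
              Real.sinh (t + x) * Real.cosh t - Real.cosh (t + x) * Real.sinh t := by
            have h := Real.sinh_sub (t + x) t
            simpa using h
          rw [e]
          have h1 : |Real.sinh (t + x)| ≤ Real.cosh (t + x) := by
            rw [Real.abs_sinh, ← Real.cosh_abs]
            exact (Real.sinh_lt_cosh _).le
          have h2 : |Real.sinh t| = Real.sinh t :=
            abs_of_nonneg (Real.sinh_nonneg_iff.mpr ht)
          have he : Real.cosh t + Real.sinh t = Real.exp t := Real.cosh_add_sinh t
          calc |Real.sinh (t + x) * Real.cosh t - Real.cosh (t + x) * Real.sinh t|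
              ≤ |Real.sinh (t + x) * Real.cosh t| + |Real.cosh (t + x) * Real.sinh t| :=
                abs_sub _ _
            _ = |Real.sinh (t + x)| * Real.cosh t + Real.cosh (t + x) * Real.sinh t := by
                rw [abs_mul, abs_mul, abs_of_pos (Real.cosh_pos t),
                  abs_of_pos (Real.cosh_pos (t + x)), h2]
            _ ≤ Real.cosh (t + x) * Real.cosh t + Real.cosh (t + x) * Real.sinh t := by
                nlinarith [Real.cosh_pos t]
            _ = Real.cosh (t + x) * Real.exp t := by rw [← he]; ring
        have hrhs : ‖Real.exp t * (g (t + x) * w x)‖ = Real.exp t * (g (t + x) * w x) := by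
          rw [Real.norm_eq_abs]
          exact abs_of_nonneg (by
            have h1 := (hgpos (t + x)).le
            have h2 := hw0 x
            positivity)
        have hlhs : ‖g (t + x) / Real.cosh (t + x) * Real.sinh x * w x‖ =
            g (t + x) / Real.cosh (t + x) * |Real.sinh x| * w x := by
          rw [Real.norm_eq_abs, abs_mul, abs_mul, abs_of_nonneg (hw0 x),
            abs_of_nonneg (div_nonneg (hgpos _).le (Real.cosh_pos _).le)]
        rw [hlhs, hrhs]
        have hmain : g (t + x) / Real.cosh (t + x) * |Real.sinh x| ≤
            Real.exp t * g (t + x) := by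
          rw [div_mul_eq_mul_div, div_le_iff₀ (Real.cosh_pos _)]
          calc g (t + x) * |Real.sinh x| ≤ g (t + x) * (Real.cosh (t + x) * Real.exp t) :=
                mul_le_mul_of_nonneg_left hsx (hgpos _).le
            _ = Real.exp t * g (t + x) * Real.cosh (t + x) := by ring
        calc g (t + x) / Real.cosh (t + x) * |Real.sinh x| * w x
            ≤ Real.exp t * g (t + x) * w x := mul_le_mul_of_nonneg_right hmain (hw0 x)
          _ = Real.exp t * (g (t + x) * w x) := by ring
    apply symm_integral_nonpos intB
    intro x
    rw [Real.sinh_neg, hwe]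
    have e2 : t + -x = t - x := by ring
    rw [e2]
    rcases le_total 0 x with hx | hx
    · have hd : g (t + x) / Real.cosh (t + x) ≤ g (t - x) / Real.cosh (t - x) := by
        apply hratio_abs
        rw [abs_of_nonneg (by linarith : (0:ℝ) ≤ t + x), abs_le]
        constructor <;> linarith
      have hs : 0 ≤ Real.sinh x := Real.sinh_nonneg_iff.mpr hx
      have : (g (t + x) / Real.cosh (t + x) - g (t - x) / Real.cosh (t - x)) *
          Real.sinh x * w x ≤ 0 :=
        mul_nonpos_of_nonpos_of_nonneg
          (mul_nonpos_of_nonpos_of_nonneg (by linarith) hs) (hw0 x)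
      nlinarith [this]
    · have hd : g (t - x) / Real.cosh (t - x) ≤ g (t + x) / Real.cosh (t + x) := by
        apply hratio_abs
        rw [abs_of_nonneg (by linarith : (0:ℝ) ≤ t - x), abs_le]
        constructor <;> linarith
      have hs : Real.sinh x ≤ 0 := by
        have := Real.sinh_neg_iff (x := x)
        rcases hx.lt_or_eq with h | h
        · exact (this.mpr h).le
        · rw [h, Real.sinh_zero]
      have : (g (t + x) / Real.cosh (t + x) - g (t - x) / Real.cosh (t - x)) *
          Real.sinh x * w x ≤ 0 :=
        mul_nonpos_of_nonpos_of_nonneg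
          (mul_nonpos_of_nonneg_of_nonpos (by linarith) hs) (hw0 x)
      nlinarith [this]
  -- key derivative inequality
  have hkey : ∀ t : ℝ, 0 ≤ t →
      (∫ x, deriv g (t + x) * w x) * Real.cosh t -
        (∫ x, g (t + x) * w x) * Real.sinh t ≤ 0 := by
    intro t ht
    have intA : Integrable (fun x => k (t + x) * w x) := by
      apply (hbint t).mono
      · exact (((hg'.comp (continuous_const.add continuous_id)).sub
          ((hg.continuous.comp (continuous_const.add continuous_id)).mul
            (((Real.continuous_sinh.comp (continuous_const.add continuous_id)).div
              (Real.continuous_cosh.comp (continuous_const.add continuous_id))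
              fun x => (Real.cosh_pos (t + x)).ne')))).aestronglyMeasurable.mul hwint.1)
      · refine Filter.Eventually.of_forall fun x => ?_
        rw [Real.norm_eq_abs, Real.norm_eq_abs, abs_mul, abs_mul,
          abs_of_nonneg (hw0 x), abs_of_nonneg
            (by have := hgpos (t + x); positivity : (0:ℝ) ≤ |deriv g (t + x)| + g (t + x))]
        apply mul_le_mul_of_nonneg_right _ (hw0 x)
        have h2 : |Real.sinh (t + x) / Real.cosh (t + x)| ≤ 1 := by
          rw [abs_div, abs_of_pos (Real.cosh_pos _), Real.abs_sinh, ← Real.cosh_abs]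
          exact (div_le_one (Real.cosh_pos _)).mpr (Real.sinh_lt_cosh _).le
        have h3 : |g (t + x) * (Real.sinh (t + x) / Real.cosh (t + x))| ≤ g (t + x) := by
          rw [abs_mul, abs_of_pos (hgpos _)]
          calc g (t + x) * |Real.sinh (t + x) / Real.cosh (t + x)| ≤ g (t + x) * 1 :=
                mul_le_mul_of_nonneg_left h2 (hgpos _).le
            _ = g (t + x) := mul_one _
        calc |k (t + x)| ≤ |deriv g (t + x)| +
              |g (t + x) * (Real.sinh (t + x) / Real.cosh (t + x))| := abs_sub _ _
          _ ≤ |deriv g (t + x)| + g (t + x) := by linarith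
    have intB : Integrable (fun x => g (t + x) / Real.cosh (t + x) * Real.sinh x * w x) := by
      apply ((hint2 t).const_mul (Real.exp t)).mono
      · exact ((((hg.continuous.comp (continuous_const.add continuous_id)).div
            (Real.continuous_cosh.comp (continuous_const.add continuous_id))
            fun x => (Real.cosh_pos (t + x)).ne').mul
            Real.continuous_sinh).aestronglyMeasurable.mul hwint.1)
      · refine Filter.Eventually.of_forall fun x => ?_
        have hsx : |Real.sinh x| ≤ Real.cosh (t + x) * Real.exp t := by
          have e : Real.sinh x =
              Real.sinh (t + x) * Real.cosh t - Real.cosh (t + x) * Real.sinh t := by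
            have h := Real.sinh_sub (t + x) t
            simpa using h
          rw [e]
          have h1 : |Real.sinh (t + x)| ≤ Real.cosh (t + x) := by
            rw [Real.abs_sinh, ← Real.cosh_abs]
            exact (Real.sinh_lt_cosh _).le
          have h2 : |Real.sinh t| = Real.sinh t :=
            abs_of_nonneg (Real.sinh_nonneg_iff.mpr ht)
          have he : Real.cosh t + Real.sinh t = Real.exp t := Real.cosh_add_sinh t
          calc |Real.sinh (t + x) * Real.cosh t - Real.cosh (t + x) * Real.sinh t|
              ≤ |Real.sinh (t + x) * Real.cosh t| + |Real.cosh (t + x) * Real.sinh t| :=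
                abs_sub _ _
            _ = |Real.sinh (t + x)| * Real.cosh t + Real.cosh (t + x) * Real.sinh t := by
                rw [abs_mul, abs_mul, abs_of_pos (Real.cosh_pos t),
                  abs_of_pos (Real.cosh_pos (t + x)), h2]
            _ ≤ Real.cosh (t + x) * Real.cosh t + Real.cosh (t + x) * Real.sinh t := by
                nlinarith [Real.cosh_pos t]
            _ = Real.cosh (t + x) * Real.exp t := by rw [← he]; ring
        have hrhs : ‖Real.exp t * (g (t + x) * w x)‖ = Real.exp t * (g (t + x) * w x) := by
          rw [Real.norm_eq_abs]
          exact abs_of_nonneg (by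
            have h1 := (hgpos (t + x)).le
            have h2 := hw0 x
            positivity)
        have hlhs : ‖g (t + x) / Real.cosh (t + x) * Real.sinh x * w x‖ =
            g (t + x) / Real.cosh (t + x) * |Real.sinh x| * w x := by
          rw [Real.norm_eq_abs, abs_mul, abs_mul, abs_of_nonneg (hw0 x),
            abs_of_nonneg (div_nonneg (hgpos _).le (Real.cosh_pos _).le)]
        rw [hlhs, hrhs]
        have hmain : g (t + x) / Real.cosh (t + x) * |Real.sinh x| ≤
            Real.exp t * g (t + x) := by
          rw [div_mul_eq_mul_div, div_le_iff₀ (Real.cosh_pos _)]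
          calc g (t + x) * |Real.sinh x| ≤ g (t + x) * (Real.cosh (t + x) * Real.exp t) :=
                mul_le_mul_of_nonneg_left hsx (hgpos _).le
            _ = Real.exp t * g (t + x) * Real.cosh (t + x) := by ring
        calc g (t + x) / Real.cosh (t + x) * |Real.sinh x| * w x
            ≤ Real.exp t * g (t + x) * w x := mul_le_mul_of_nonneg_right hmain (hw0 x)
          _ = Real.exp t * (g (t + x) * w x) := by ring
    have e : (∫ x, deriv g (t + x) * w x) * Real.cosh t -
        (∫ x, g (t + x) * w x) * Real.sinh t =
        Real.cosh t * (∫ x, k (t + x) * w x) +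
          ∫ x, g (t + x) / Real.cosh (t + x) * Real.sinh x * w x := by
      rw [← integral_mul_const, ← integral_mul_const,
        ← integral_sub ((hFD t).1.mul_const _) ((hint2 t).mul_const _),
        ← integral_const_mul, ← integral_add (intA.const_mul _) intB]
      apply integral_congr_ae
      refine Filter.Eventually.of_forall fun x => ?_
      have hsx : Real.sinh x =
          Real.sinh (t + x) * Real.cosh t - Real.cosh (t + x) * Real.sinh t := by
        have h := Real.sinh_sub (t + x) t
        simpa using h
      simp only [hk_def]
      rw [hsx]
      have hc : Real.cosh (t + x) ≠ 0 := (Real.cosh_pos _).ne'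
      field_simp
      ring
    rw [e]
    have h1 := hkeyA t ht
    have h2 := hkeyB t ht
    nlinarith [Real.cosh_pos t, mul_nonpos_of_nonneg_of_nonpos (Real.cosh_pos t).le h1]
  -- antitonicity of the base (m = 1) function
  have hGd : ∀ t : ℝ, HasDerivAt (fun u => (∫ x, g (u + x) * w x) / Real.cosh u)
      (((∫ x, deriv g (t + x) * w x) * Real.cosh t -
        (∫ x, g (t + x) * w x) * Real.sinh t) / Real.cosh t ^ 2) t :=
    fun t => ((hFD t).2).div (Real.hasDerivAt_cosh t) (Real.cosh_pos t).ne'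
  have hGanti : AntitoneOn (fun u => (∫ x, g (u + x) * w x) / Real.cosh u)
      (Set.Ici (0:ℝ)) := by
    apply antitoneOn_of_deriv_nonpos (convex_Ici 0)
    · have hdiff : Differentiable ℝ (fun u => (∫ x, g (u + x) * w x) / Real.cosh u) :=
        fun t => (hGd t).differentiableAt
      exact hdiff.continuous.continuousOn
    · exact fun x _ => (hGd x).differentiableAt.differentiableWithinAt
    · intro x hx
      rw [interior_Ici] at hx
      rw [(hGd x).deriv]
      exact div_nonpos_of_nonpos_of_nonneg (hkey x (le_of_lt hx)) (sq_nonneg _)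
  -- conclusion for general m
  intro m hm a ha b hb hab
  obtain ⟨hm0, hm1⟩ := hm
  have hFa := hFpos a
  have hFb := hFpos b
  have hca := Real.cosh_pos a
  have hcb := Real.cosh_pos b
  have hid : ∀ u : ℝ, (∫ x, g (u + x) * w x) ^ m / Real.cosh u
      = ((∫ x, g (u + x) * w x) / Real.cosh u) ^ m * Real.cosh u ^ (m - 1) := by
    intro u
    rw [Real.div_rpow (hFpos u).le (Real.cosh_pos u).le,
      Real.rpow_sub (Real.cosh_pos u), Real.rpow_one]
    have h1 : Real.cosh u ^ m ≠ 0 := (Real.rpow_pos_of_pos (Real.cosh_pos u) m).ne'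
    field_simp
  simp only [hid]
  have hGle : (∫ x, g (b + x) * w x) / Real.cosh b ≤ (∫ x, g (a + x) * w x) / Real.cosh a :=
    hGanti ha hb hab
  have hcosh : Real.cosh a ≤ Real.cosh b := by
    rw [Real.cosh_le_cosh, abs_of_nonneg ha, abs_of_nonneg hb]
    exact hab
  apply mul_le_mul
  · exact Real.rpow_le_rpow (div_nonneg hFb.le hcb.le) hGle hm0
  · exact Real.rpow_le_rpow_of_nonpos hca hcosh (by linarith)
  · exact Real.rpow_nonneg hcb.le _
  · exact Real.rpow_nonneg (div_nonneg hFa.le hca.le) _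
end
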